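/- Let q be a real number with −2 < q < −√3. Then the recursion r_{n+1} = r_n + q + 1/r_n is chaotic in the sense of Li and Yorke on (0, ∞): there exists an uncountable set S ⊆ (0, ∞) such that for every r₀ ∈ S the orbit (f_q^n(r₀)) stays in (0, ∞) and is bounded, and for all u, v ∈ S with u ≠ v, limsup_{n→∞} |f_q^n(u) − f_q^n(v)| > 0 and liminf_{n→∞} |f_q^n(u) − f_q^n(v)| = 0. -/

import Mathlib

/-!
The fixed point `p = -1/q` of `f r = r + q + 1/r` is repelling, since `f' p = 1 - 1/p² < -2`, and
it is a snap-back repeller: the smaller root `x < p` of `x + 1/x = 2/p` satisfies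
`f x = 1/p` and `f (1/p) = p`. Quantitatively, for `-2 < q < -√3`, the map expands every symmetric
interval around `p` reaching down to `x` by a factor larger than one, and a small interval around
`x` is carried onto a neighbourhood of `1/p`, which lies far from `p` and is carried back onto a
neighbourhood of `p` because `f (1/r) = f r`.

Compact intervals covering each other under `f` can be chained: any infinite chain is followed by
some orbit. For every `y : ℕ → Bool` we chain blocks, the `k`-th of which first expands from a
neighbourhood of `p` shrunk `k + 1` times, then either makes the excursion `x ↦ 1/p ↦ p` or stays
near `p`, depending on a bit of `y` that is revisited in infinitely many blocks. Two such orbits are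
simultaneously very close to `p` at the start of every block, and if `y ≠ y'` they are infinitely
often on opposite sides of the gap between `1/p` and `p`. As there are uncountably many `y`, this
yields an uncountable scrambled set.
-/

open Set Filter Topology Metric Function

section CoveringChain

variable {X : Type*} {g : X → X} {I : ℕ → Set X}

def iterateCylinder (g : X → X) (I : ℕ → Set X) (n : ℕ) : Set X :=
  {u | ∀ i ≤ n, g^[i] u ∈ I i}

theorem iterateCylinder_zero : iterateCylinder g I 0 = I 0 := by
  simp [iterateCylinder]

theorem iterateCylinder_succ (n : ℕ) :
    iterateCylinder g I (n + 1) = iterateCylinder g I n ∩ g^[n + 1] ⁻¹' I (n + 1) := by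
  ext u
  simp only [iterateCylinder, mem_ofPred_eq, mem_inter_iff, mem_preimage, Nat.le_succ_iff]
  exact ⟨fun h => ⟨fun i hi => h i (.inl hi), h _ (.inr rfl)⟩,
    fun h i hi => hi.elim (h.1 i) fun hi => hi ▸ h.2⟩

theorem subset_image_iterate_iterateCylinder (hcov : ∀ n, I (n + 1) ⊆ g '' I n) (n : ℕ) :
    I n ⊆ g^[n] '' iterateCylinder g I n := by
  induction n with
  | zero => simp [iterateCylinder_zero]
  | succ n ih =>
    intro z hz
    obtain ⟨w, hw, rfl⟩ := hcov n hz
    obtain ⟨u, hu, rfl⟩ := ih hw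
    refine ⟨u, ?_, iterate_succ_apply' g n u⟩
    rw [iterateCylinder_succ]
    exact ⟨hu, by rwa [mem_preimage, iterate_succ_apply']⟩

variable [TopologicalSpace X]

theorem continuousOn_iterate_succ_iterateCylinder (hg : ∀ n, ContinuousOn g (I n)) (n : ℕ) :
    ContinuousOn g^[n + 1] (iterateCylinder g I n) := by
  induction n with
  | zero => simpa [iterateCylinder_zero] using hg 0
  | succ n ih =>
    rw [iterate_succ']
    exact (hg (n + 1)).comp (ih.mono fun u hu i hi => hu i (by omega)) fun u hu => hu _ le_rfl

theorem isClosed_iterateCylinder (hI : ∀ n, IsClosed (I n)) (hg : ∀ n, ContinuousOn g (I n))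
    (n : ℕ) : IsClosed (iterateCylinder g I n) := by
  induction n with
  | zero => exact iterateCylinder_zero (g := g) ▸ hI 0
  | succ n ih =>
    rw [iterateCylinder_succ]
    exact (continuousOn_iterate_succ_iterateCylinder hg n).preimage_isClosed_of_isClosed ih (hI _)

theorem exists_forall_iterate_mem_of_subset_image (hI₀ : IsCompact (I 0))
    (hI : ∀ n, IsClosed (I n)) (hne : ∀ n, (I n).Nonempty) (hg : ∀ n, ContinuousOn g (I n))
    (hcov : ∀ n, I (n + 1) ⊆ g '' I n) : ∃ u, ∀ n, g^[n] u ∈ I n := by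
  obtain ⟨u, hu⟩ := IsCompact.nonempty_iInter_of_sequence_nonempty_isCompact_isClosed
    (iterateCylinder g I) (fun n => by rw [iterateCylinder_succ]; exact inter_subset_left)
    (fun n => ((hne n).mono (subset_image_iterate_iterateCylinder hcov n)).of_image)
    (iterateCylinder_zero (g := g) ▸ hI₀) (isClosed_iterateCylinder hI hg)
  exact ⟨u, fun n => mem_iInter.1 hu n n le_rfl⟩

end CoveringChain

section BlockSchedule

def nextSlot (len : ℕ → ℕ) (s : ℕ × ℕ) : ℕ × ℕ :=
  if s.2 < len s.1 then (s.1, s.2 + 1) else (s.1 + 1, 0)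

/-- Time `n` ↦ (block, position), block `k` consisting of the positions `0, …, len k`. -/
def blockSchedule (len : ℕ → ℕ) (n : ℕ) : ℕ × ℕ :=
  (nextSlot len)^[n] (0, 0)

variable {len : ℕ → ℕ}

theorem blockSchedule_succ (n : ℕ) :
    blockSchedule len (n + 1) = nextSlot len (blockSchedule len n) :=
  iterate_succ_apply' _ _ _

theorem blockSchedule_snd_le (n : ℕ) : (blockSchedule len n).2 ≤ len (blockSchedule len n).1 := by
  induction n with
  | zero => simp [blockSchedule]
  | succ n ih =>
    rw [blockSchedule_succ, nextSlot]
    split_ifs with h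
    · exact h
    · exact Nat.zero_le _

theorem blockSchedule_add_of_eq {n k i : ℕ} (h : blockSchedule len n = (k, 0)) (hi : i ≤ len k) :
    blockSchedule len (n + i) = (k, i) := by
  induction i with
  | zero => exact h
  | succ i ih =>
    rw [← add_assoc, blockSchedule_succ, ih (by omega), nextSlot, if_pos (by simpa using hi)]

theorem exists_blockSchedule_eq (k : ℕ) : ∃ n, k ≤ n ∧ blockSchedule len n = (k, 0) := by
  induction k with
  | zero => exact ⟨0, le_rfl, rfl⟩
  | succ k ih =>
    obtain ⟨n, hkn, hn⟩ := ih
    refine ⟨n + len k + 1, by omega, ?_⟩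
    rw [blockSchedule_succ, blockSchedule_add_of_eq hn le_rfl, nextSlot, if_neg (lt_irrefl _)]

end BlockSchedule

theorem exists_pos_le_dist_of_disjoint {X : Type*} [PseudoMetricSpace X] {s t : Set X}
    (hs : IsCompact s) (ht : IsClosed t) (hst : Disjoint s t) :
    ∃ c > 0, ∀ a ∈ s, ∀ b ∈ t, c ≤ dist a b := by
  obtain ⟨r, hr, h⟩ := exists_pos_forall_lt_edist hs ht hst
  refine ⟨r, hr, fun a ha b hb => ?_⟩
  have := h a ha b hb
  rw [edist_nndist, ENNReal.coe_lt_coe, ← NNReal.coe_lt_coe, coe_nndist] at this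
  exact this.le

theorem liminf_eq_zero_of_frequently_le {ι : Type*} {l : Filter ι} [l.NeBot] {u : ι → ℝ}
    (h0 : ∀ i, 0 ≤ u i) (hbdd : IsBoundedUnder (· ≤ ·) l u)
    (h : ∀ ε > 0, ∃ᶠ i in l, u i ≤ ε) : liminf u l = 0 :=
  le_antisymm
    (le_of_forall_gt_imp_ge_of_dense fun ε hε =>
      liminf_le_of_frequently_le (h ε hε) (isBoundedUnder_of ⟨0, h0⟩))
    (le_liminf_of_le hbdd.isCoboundedUnder_ge (Eventually.of_forall h0))

def IsScrambled {X : Type*} [PseudoMetricSpace X] (g : X → X) (S : Set X) : Prop :=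
  ∀ u ∈ S, ∀ v ∈ S, u ≠ v →
    0 < limsup (fun n => dist (g^[n] u) (g^[n] v)) atTop ∧
      liminf (fun n => dist (g^[n] u) (g^[n] v)) atTop = 0

/-- `nbhd t` are shrinking neighbourhoods of a repelling fixed point, each covered by the image of
the next one; `out → far → nbhd retDepth` is a snap-back excursion through a set `far` away from
`nbhd 0`. -/
structure SnapBackCover {X : Type*} [MetricSpace X] (g : X → X) where
  nbhd : ℕ → Set X
  out : Set X
  far : Set X
  retDepth : ℕ
  isCompact_nbhd : ∀ t, IsCompact (nbhd t)
  nonempty_nbhd : ∀ t, (nbhd t).Nonempty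
  antitone_nbhd : Antitone nbhd
  tendsto_diam_nbhd : Tendsto (fun t => diam (nbhd t)) atTop (𝓝 0)
  isCompact_out : IsCompact out
  isCompact_far : IsCompact far
  disjoint_far_nbhd : Disjoint far (nbhd 0)
  continuousOn : ContinuousOn g (nbhd 0 ∪ out ∪ far)
  nbhd_subset_image : ∀ t, nbhd t ⊆ g '' nbhd (t + 1)
  out_subset_image : out ⊆ g '' nbhd 0
  far_subset_image : far ⊆ g '' out
  nbhd_retDepth_subset_image : nbhd retDepth ⊆ g '' far

namespace SnapBackCover

variable {X : Type*} [MetricSpace X] {g : X → X} (P : SnapBackCover g)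

def support : Set X := P.nbhd 0 ∪ P.out ∪ P.far

def blockLen (k : ℕ) : ℕ := k + P.retDepth + 4

/-- Block `k` runs through `nbhd (k + 1), …, nbhd 0`, then `out, far` if the bit `y j` with
`j = k.unpair.1` is set and `nbhd 0, nbhd 0` otherwise, then `nbhd retDepth, …, nbhd 0`.
Every bit of `y` is read in the infinitely many blocks `k = Nat.pair j N`. -/
def itinerary (y : ℕ → Bool) : ℕ × ℕ → Set X
  | (k, i) =>
    if y k.unpair.1 ∧ i = k + 2 then P.out
    else if y k.unpair.1 ∧ i = k + 3 then P.far
    else P.nbhd (if i ≤ k + 1 then k + 1 - i else if i ≤ k + 3 then 0 else P.blockLen k - i)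

theorem nbhd_subset_image_of_le {s t : ℕ} (h : t ≤ s + 1) : P.nbhd s ⊆ g '' P.nbhd t := by
  rcases t with _ | t
  · exact (P.antitone_nbhd (Nat.zero_le s)).trans ((P.nbhd_subset_image 0).trans
      (image_mono (P.antitone_nbhd (Nat.zero_le 1))))
  · exact (P.antitone_nbhd (by omega)).trans (P.nbhd_subset_image t)

theorem itinerary_nextSlot_subset (y : ℕ → Bool) {s : ℕ × ℕ} (hs : s.2 ≤ P.blockLen s.1) :
    P.itinerary y (nextSlot P.blockLen s) ⊆ g '' P.itinerary y s := by
  obtain ⟨k, i⟩ := s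
  have hout : ∀ t, t = 0 → P.out ⊆ g '' P.nbhd t := by rintro _ rfl; exact P.out_subset_image
  have hret : ∀ t, t = P.retDepth → P.nbhd t ⊆ g '' P.far := by
    rintro _ rfl; exact P.nbhd_retDepth_subset_image
  unfold nextSlot blockLen at *
  dsimp only at hs
  by_cases hy : y k.unpair.1 <;> split_ifs <;>
    simp only [itinerary, blockLen, hy, true_and, Bool.false_eq_true, false_and, if_false] <;>
    split_ifs <;>
    first
    | omega
    | exact P.nbhd_subset_image_of_le (by omega)
    | exact hout _ (by omega)
    | exact P.far_subset_image
    | exact hret _ (by omega)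

theorem itinerary_eq_or (y : ℕ → Bool) (s : ℕ × ℕ) :
    P.itinerary y s = P.out ∨ P.itinerary y s = P.far ∨ ∃ t, P.itinerary y s = P.nbhd t := by
  obtain ⟨k, i⟩ := s
  simp only [itinerary]
  split_ifs <;> simp

theorem isCompact_support : IsCompact P.support :=
  ((P.isCompact_nbhd 0).union P.isCompact_out).union P.isCompact_far

theorem itinerary_subset_support (y : ℕ → Bool) (s : ℕ × ℕ) : P.itinerary y s ⊆ P.support := by
  rcases P.itinerary_eq_or y s with h | h | ⟨t, h⟩ <;> rw [h, support]
  · exact subset_union_right.trans subset_union_left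
  · exact subset_union_right
  · exact (P.antitone_nbhd (Nat.zero_le t)).trans (subset_union_left.trans subset_union_left)

theorem isCompact_itinerary (y : ℕ → Bool) (s : ℕ × ℕ) : IsCompact (P.itinerary y s) := by
  rcases P.itinerary_eq_or y s with h | h | ⟨t, h⟩ <;> rw [h]
  exacts [P.isCompact_out, P.isCompact_far, P.isCompact_nbhd t]

theorem nonempty_itinerary (y : ℕ → Bool) (s : ℕ × ℕ) : (P.itinerary y s).Nonempty := by
  have hfar : P.far.Nonempty :=
    ((P.nonempty_nbhd _).mono P.nbhd_retDepth_subset_image).of_image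
  rcases P.itinerary_eq_or y s with h | h | ⟨t, h⟩ <;> rw [h]
  exacts [(hfar.mono P.far_subset_image).of_image, hfar, P.nonempty_nbhd t]

theorem exists_forall_iterate_mem_itinerary (y : ℕ → Bool) :
    ∃ u, ∀ n, g^[n] u ∈ P.itinerary y (blockSchedule P.blockLen n) :=
  exists_forall_iterate_mem_of_subset_image (P.isCompact_itinerary y _)
    (fun _ => (P.isCompact_itinerary y _).isClosed) (fun _ => P.nonempty_itinerary y _)
    (fun _ => P.continuousOn.mono (P.itinerary_subset_support y _))
    fun n => by
      rw [blockSchedule_succ]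
      exact P.itinerary_nextSlot_subset y (blockSchedule_snd_le n)

theorem itinerary_zero (y : ℕ → Bool) (k : ℕ) : P.itinerary y (k, 0) = P.nbhd (k + 1) := by
  simp [itinerary]

theorem itinerary_of_eq_true {y : ℕ → Bool} {k : ℕ} (hy : y k.unpair.1 = true) :
    P.itinerary y (k, k + 3) = P.far := by
  simp [itinerary, hy]

theorem itinerary_of_eq_false {y : ℕ → Bool} {k : ℕ} (hy : y k.unpair.1 = false) :
    P.itinerary y (k, k + 3) = P.nbhd 0 := by
  simp [itinerary, hy]

variable {P} {U : (ℕ → Bool) → X}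

theorem exists_dist_iterate_le_diam
    (hU : ∀ y n, g^[n] (U y) ∈ P.itinerary y (blockSchedule P.blockLen n)) (y y' : ℕ → Bool)
    (k : ℕ) : ∃ n ≥ k, dist (g^[n] (U y)) (g^[n] (U y')) ≤ diam (P.nbhd (k + 1)) := by
  obtain ⟨n, hkn, hn⟩ := exists_blockSchedule_eq (len := P.blockLen) k
  have hy := hU y n
  have hy' := hU y' n
  rw [hn, itinerary_zero] at hy hy'
  exact ⟨n, hkn, dist_le_diam_of_mem (P.isCompact_nbhd _).isBounded hy hy'⟩

theorem exists_iterate_mem_far_nbhd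
    (hU : ∀ y n, g^[n] (U y) ∈ P.itinerary y (blockSchedule P.blockLen n)) {y y' : ℕ → Bool}
    {j : ℕ} (hy : y j = true) (hy' : y' j = false) (N : ℕ) :
    ∃ n ≥ N, g^[n] (U y) ∈ P.far ∧ g^[n] (U y') ∈ P.nbhd 0 := by
  set k := Nat.pair j N
  have hkj : k.unpair.1 = j := by simp [k]
  obtain ⟨n, -, hn⟩ := exists_blockSchedule_eq (len := P.blockLen) k
  have hs := blockSchedule_add_of_eq hn (show k + 3 ≤ P.blockLen k by simp [blockLen]; omega)
  have hmem := hU y (n + (k + 3))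
  have hmem' := hU y' (n + (k + 3))
  rw [hs, itinerary_of_eq_true _ (hkj ▸ hy)] at hmem
  rw [hs, itinerary_of_eq_false _ (hkj ▸ hy')] at hmem'
  exact ⟨n + (k + 3), by linarith [Nat.right_le_pair j N], hmem, hmem'⟩

variable (P)

theorem exists_isScrambled :
    ∃ S : Set X, ¬ S.Countable ∧ (∀ u ∈ S, ∀ n, g^[n] u ∈ P.support) ∧ IsScrambled g S := by
  choose U hU using P.exists_forall_iterate_mem_itinerary
  have hsupp : ∀ y n, g^[n] (U y) ∈ P.support := fun y n => P.itinerary_subset_support y _ (hU y n)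
  obtain ⟨c, hc, hfar⟩ := exists_pos_le_dist_of_disjoint P.isCompact_far
    (P.isCompact_nbhd 0).isClosed P.disjoint_far_nbhd
  have hsep : ∀ y y', y ≠ y' → ∀ N, ∃ n ≥ N, c ≤ dist (g^[n] (U y)) (g^[n] (U y')) := by
    intro y y' hne N
    obtain ⟨j, hj⟩ := Function.ne_iff.1 hne
    cases hyj : y j <;> cases hyj' : y' j <;> simp only [hyj, hyj', ne_eq, not_true_eq_false] at hj
    · obtain ⟨n, hn, h', h⟩ := exists_iterate_mem_far_nbhd hU hyj' hyj N
      exact ⟨n, hn, dist_comm (g^[n] (U y)) _ ▸ hfar _ h' _ h⟩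
    · obtain ⟨n, hn, h, h'⟩ := exists_iterate_mem_far_nbhd hU hyj hyj' N
      exact ⟨n, hn, hfar _ h _ h'⟩
  have hinj : Injective U := fun y y' h => by
    by_contra hne
    obtain ⟨n, -, hn⟩ := hsep y y' hne 0
    rw [h, dist_self] at hn
    exact hc.not_ge hn
  refine ⟨range U, fun hcount => ?_, by rintro _ ⟨y, rfl⟩; exact hsupp y, ?_⟩
  · have : Uncountable (ℕ → Bool) := by
      rw [← Cardinal.aleph0_lt_mk_iff]
      simpa using Cardinal.aleph0_lt_continuum
    have := hcount.preimage hinj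
    rw [preimage_range] at this
    exact not_countable (countable_univ_iff.1 this)
  rintro _ ⟨y, rfl⟩ _ ⟨y', rfl⟩ hne
  have hbdd : IsBoundedUnder (· ≤ ·) atTop fun n => dist (g^[n] (U y)) (g^[n] (U y')) :=
    isBoundedUnder_of ⟨_, fun n =>
      dist_le_diam_of_mem P.isCompact_support.isBounded (hsupp y n) (hsupp y' n)⟩
  refine ⟨hc.trans_le (le_limsup_of_frequently_le
    (frequently_atTop.2 (hsep y y' (ne_of_apply_ne U hne))) hbdd),
    liminf_eq_zero_of_frequently_le (fun _ => dist_nonneg) hbdd fun ε hε => ?_⟩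
  refine frequently_atTop.2 fun N => ?_
  obtain ⟨k, hk, hkN⟩ := (((P.tendsto_diam_nbhd.comp (tendsto_add_atTop_nat 1)).eventually
    (gt_mem_nhds hε)).and (eventually_ge_atTop N)).exists
  obtain ⟨n, hn, hdist⟩ := exists_dist_iterate_le_diam hU y y' k
  exact ⟨n, hkN.trans hn, hdist.trans hk.le⟩

end SnapBackCover

noncomputable def recursionMap (q r : ℝ) : ℝ := r + q + 1 / r

theorem recursionMap_inv (q r : ℝ) : recursionMap q r⁻¹ = recursionMap q r := by
  simp only [recursionMap, one_div, inv_inv]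
  ring

theorem continuousOn_recursionMap (q : ℝ) : ContinuousOn (recursionMap q) (Ioi 0) := by
  unfold recursionMap
  exact (continuousOn_id.add continuousOn_const).add
    (continuousOn_const.div continuousOn_id fun r hr => (mem_Ioi.1 hr).ne')

section RecursionMap

variable {p q x ε R E κ : ℝ}

theorem recursionMap_add {a s : ℝ} (ha : a ≠ 0) (has : a + s ≠ 0) :
    recursionMap q (a + s) = recursionMap q a + s - s / (a * (a + s)) := by
  simp only [recursionMap]
  field_simp
  ring

theorem recursionMap_eq_self (hpq : p * q = -1) : recursionMap q p = p := by
  have hp : p ≠ 0 := by rintro rfl; simp at hpq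
  simp only [recursionMap]
  field_simp
  linarith

/-! Near the fixed point `p`, `f (p + s) - p = -s (1 / (p (p + s)) - 1)`, so `f` reverses and
expands `[p - ε, p + ε]` by the factor `1 / (p (p + R)) - 1` as long as `ε ≤ R`. -/

theorem recursionMap_add_le (hpq : p * q = -1) (hp : 0 < p) (hε : 0 < ε) (hεR : ε ≤ R) :
    recursionMap q (p + ε) ≤ p - ((p * (p + R))⁻¹ - 1) * ε := by
  have hw : (p * (p + R))⁻¹ ≤ (p * (p + ε))⁻¹ :=
    inv_anti₀ (by positivity) (mul_le_mul_of_nonneg_left (by linarith) hp.le)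
  rw [recursionMap_add hp.ne' (by positivity), recursionMap_eq_self hpq, div_eq_mul_inv]
  nlinarith

theorem le_recursionMap_sub (hpq : p * q = -1) (hε : 0 < ε) (hεR : ε ≤ R) (hεp : ε < p) :
    p + ((p * (p + R))⁻¹ - 1) * ε ≤ recursionMap q (p - ε) := by
  have hp : 0 < p := hε.trans hεp
  have hw : (p * (p + R))⁻¹ ≤ (p * (p + -ε))⁻¹ :=
    inv_anti₀ (mul_pos hp (by linarith)) (mul_le_mul_of_nonneg_left (by linarith) hp.le)
  rw [sub_eq_add_neg p ε, recursionMap_add hp.ne' (by linarith), recursionMap_eq_self hpq,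
    div_eq_mul_inv]
  nlinarith

theorem Icc_subset_image_recursionMap (hpq : p * q = -1) (hε : 0 < ε) (hεR : ε ≤ R)
    (hεp : ε < p) :
    Icc (p - ((p * (p + R))⁻¹ - 1) * ε) (p + ((p * (p + R))⁻¹ - 1) * ε) ⊆
      recursionMap q '' Icc (p - ε) (p + ε) :=
  (Icc_subset_Icc (recursionMap_add_le hpq (hε.trans hεp) hε hεR)
      (le_recursionMap_sub hpq hε hεR hεp)).trans
    (intermediate_value_Icc' (by linarith) ((continuousOn_recursionMap q).mono
      fun r hr => show 0 < r by linarith [hr.1]))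

theorem Icc_subset_image_Icc_inv (hpq : p * q = -1) (hε : 0 < ε) (hεR : ε ≤ R) (hεp : ε < p) :
    Icc (p - ((p * (p + R))⁻¹ - 1) * ε) (p + ((p * (p + R))⁻¹ - 1) * ε) ⊆
      recursionMap q '' Icc (p + ε)⁻¹ (p - ε)⁻¹ := by
  have hcover := intermediate_value_Icc (inv_anti₀ (by linarith) (by linarith : p - ε ≤ p + ε))
    ((continuousOn_recursionMap q).mono fun r hr =>
      show 0 < r from (inv_pos.2 (by linarith)).trans_le hr.1)
  rw [recursionMap_inv, recursionMap_inv] at hcover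
  exact (Icc_subset_Icc (recursionMap_add_le hpq (hε.trans hεp) hε hεR)
    (le_recursionMap_sub hpq hε hεR hεp)).trans hcover

theorem Icc_sub_div_pow_subset_image (hpq : p * q = -1) (hE : 0 < E) (hEp : E < p)
    (hκ : κ = (p * (p + E))⁻¹ - 1) (hκ1 : 1 ≤ κ) (t : ℕ) :
    Icc (p - E / κ ^ t) (p + E / κ ^ t) ⊆
      recursionMap q '' Icc (p - E / κ ^ (t + 1)) (p + E / κ ^ (t + 1)) := by
  have hκ0 : 0 < κ := by linarith
  have hrad : E / κ ^ t = ((p * (p + E))⁻¹ - 1) * (E / κ ^ (t + 1)) := by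
    rw [← hκ, pow_succ]
    field_simp
  have hle : E / κ ^ (t + 1) ≤ E := div_le_self hE.le (one_le_pow₀ hκ1)
  rw [hrad]
  exact Icc_subset_image_recursionMap hpq (by positivity) hle (by linarith)

theorem exists_fixedPt_snapBackPt (hq1 : -2 < q) (hq2 : q < -√3) :
    ∃ p x : ℝ, p * q = -1 ∧ 1 / 2 < p ∧ 3 * p ^ 2 < 1 ∧ 1 / 4 < x ∧ 3 * x < 1 ∧
      p * (x ^ 2 + 1) = 2 * x := by
  have h3 : (0 : ℝ) ≤ 3 := by norm_num
  have hq : 3 < q ^ 2 := by nlinarith [Real.sq_sqrt h3, Real.sqrt_nonneg 3]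
  have hq0 : q < -5 / 3 := by nlinarith [Real.sqrt_nonneg 3]
  have hs := Real.sq_sqrt (show 0 ≤ q ^ 2 - 1 by linarith)
  have hs0 := Real.sqrt_nonneg (q ^ 2 - 1)
  refine ⟨-q⁻¹, -q - √(q ^ 2 - 1), by rw [neg_mul, inv_mul_cancel₀ (by linarith)],
    ?_, ?_, ?_, ?_, ?_⟩
  · rw [neg_inv, lt_inv_comm₀ (by norm_num) (by linarith)]
    linarith
  · rw [neg_sq, inv_pow, mul_inv_lt_iff₀ (by positivity)]
    linarith
  · have : √(q ^ 2 - 1) < -q - 1 / 4 := by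
      by_contra! h
      nlinarith [mul_self_le_mul_self (by linarith : (0 : ℝ) ≤ -q - 1 / 4) h]
    linarith
  · have : -q - 1 / 3 < √(q ^ 2 - 1) := by
      by_contra! h
      nlinarith [mul_self_le_mul_self hs0 h]
    linarith
  · have : q ≠ 0 := by linarith
    field_simp
    linear_combination (-1 : ℝ) * hs

/-- The one tight estimate: the expansion factor `(p (p + E))⁻¹ - 1` on the largest neighbourhood
`[x - 1/100, 2p - x + 1/100]` of `p` exceeds one. -/
theorem fixedPt_mul_lt_half (hp : 1 / 2 < p) (hp' : 3 * p ^ 2 < 1) (hx : 1 / 4 < x)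
    (hpx : p * (x ^ 2 + 1) = 2 * x) :
    p * (p + (p - x + 1 / 100)) < 1 / 2 := by
  nlinarith [sq_nonneg (p - x), sq_nonneg (p + x), sq_nonneg (x - 1 / 3), sq_nonneg (p - 1 / 2),
    mul_pos (by linarith : (0 : ℝ) < p) (by linarith : (0 : ℝ) < x)]

theorem fixedPt_add_lt_inv (hp' : 3 * p ^ 2 < 1) (hx : 1 / 4 < x) (hxp : x < p) :
    p + (p - x + 1 / 100) < (p + 1 / 100)⁻¹ := by
  rw [← one_div, lt_div_iff₀ (by linarith)]
  nlinarith

theorem Icc_inv_subset_image_recursionMap (hpq : p * q = -1) (hp : 1 / 2 < p)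
    (hx : 1 / 4 < x) (hx' : 3 * x < 1) (hpx : p * (x ^ 2 + 1) = 2 * x) :
    Icc (p + 1 / 100)⁻¹ (p - 1 / 100)⁻¹ ⊆ recursionMap q '' Icc (x - 1 / 100) (x + 1 / 100) := by
  have hp0 : 0 < p := by linarith
  have hfx : recursionMap q x = p⁻¹ := by
    have : x ≠ 0 := by linarith
    simp only [recursionMap]
    field_simp
    linear_combination hpx + x * hpq
  -- `f` has slope below `-7` on `out`, whereas `r ↦ r⁻¹` has slope above `-5` near `p`
  have hup : recursionMap q (x + 1 / 100) ≤ (p + 1 / 100)⁻¹ := by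
    rw [recursionMap_add (by linarith) (by linarith), hfx]
    have hx8 : 8 / 100 ≤ 1 / 100 / (x * (x + 1 / 100)) := by
      rw [le_div_iff₀ (by positivity)]
      nlinarith
    have hp4 : p⁻¹ - (p + 1 / 100)⁻¹ ≤ 4 / 100 := by
      rw [inv_sub_inv (by positivity) (by positivity), div_le_iff₀ (by positivity)]
      nlinarith
    linarith
  have hlo : (p - 1 / 100)⁻¹ ≤ recursionMap q (x - 1 / 100) := by
    rw [sub_eq_add_neg x, recursionMap_add (by linarith) (by linarith), hfx]
    simp only [← sub_eq_add_neg, neg_div, sub_neg_eq_add]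
    have hx8 : 8 / 100 ≤ 1 / 100 / (x * (x - 1 / 100)) := by
      have : 0 < x - 1 / 100 := by linarith
      rw [le_div_iff₀ (by positivity)]
      nlinarith
    have hp5 : (p - 1 / 100)⁻¹ - p⁻¹ ≤ 5 / 100 := by
      have : 0 < p - 1 / 100 := by linarith
      rw [inv_sub_inv (by positivity) (by positivity), div_le_iff₀ (by positivity)]
      nlinarith
    linarith
  exact (Icc_subset_Icc hup hlo).trans (intermediate_value_Icc' (by linarith)
    ((continuousOn_recursionMap q).mono fun r hr => show 0 < r by linarith [hr.1]))

theorem exists_snapBackCover_recursionMap (hpq : p * q = -1) (hp : 1 / 2 < p)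
    (hp' : 3 * p ^ 2 < 1) (hx : 1 / 4 < x) (hx' : 3 * x < 1) (hpx : p * (x ^ 2 + 1) = 2 * x) :
    ∃ P : SnapBackCover (recursionMap q), P.support ⊆ Ioi 0 := by
  -- `E` is chosen so that the largest neighbourhood `nbhd 0` reaches down to `out`
  obtain ⟨E, hE⟩ : ∃ E, E = p - x + 1 / 100 := ⟨_, rfl⟩
  obtain ⟨κ, hκ_def⟩ : ∃ κ, κ = (p * (p + E))⁻¹ - 1 := ⟨_, rfl⟩
  have hκ : 1 < κ := by
    have h2 : 2 < (p * (p + E))⁻¹ := (lt_inv_comm₀ two_pos (by nlinarith)).2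
      (by rw [hE]; linarith [fixedPt_mul_lt_half hp hp' hx hpx])
    linarith
  have hr : ∀ t, 0 < E / κ ^ t := fun t => div_pos (by linarith) (by positivity)
  have hr_tendsto : Tendsto (fun t : ℕ => E / κ ^ t) atTop (𝓝 0) :=
    tendsto_const_nhds.div_atTop (tendsto_pow_atTop_atTop_of_one_lt hκ)
  obtain ⟨m, hm⟩ := (hr_tendsto.eventually (gt_mem_nhds (by norm_num : (0 : ℝ) < 1 / 100))).exists
  have hnbhd := Icc_sub_div_pow_subset_image (q := q) hpq (by linarith) (by linarith) hκ_def hκ.le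
  have hsupp : Icc (p - E / κ ^ 0) (p + E / κ ^ 0) ∪ Icc (x - 1 / 100) (x + 1 / 100) ∪
      Icc (p + 1 / 100)⁻¹ (p - 1 / 100)⁻¹ ⊆ Ioi 0 := by
    rintro a ((ha | ha) | ha) <;> rw [mem_Ioi]
    · have := ha.1
      rw [pow_zero, div_one] at this
      linarith
    · linarith [ha.1]
    · exact (inv_pos.2 (by linarith)).trans_le ha.1
  refine ⟨{
    nbhd := fun t => Icc (p - E / κ ^ t) (p + E / κ ^ t)
    out := Icc (x - 1 / 100) (x + 1 / 100)
    far := Icc (p + 1 / 100)⁻¹ (p - 1 / 100)⁻¹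
    retDepth := m
    isCompact_nbhd := fun _ => isCompact_Icc
    nonempty_nbhd := fun t => nonempty_Icc.2 (by linarith [hr t])
    antitone_nbhd := fun s t hst => by
      have : E / κ ^ t ≤ E / κ ^ s :=
        div_le_div_of_nonneg_left (by linarith) (by positivity) (pow_le_pow_right₀ hκ.le hst)
      exact Icc_subset_Icc (by linarith) (by linarith)
    tendsto_diam_nbhd := by
      have hdiam : (fun t : ℕ => diam (Icc (p - E / κ ^ t) (p + E / κ ^ t))) =
          fun t => 2 * (E / κ ^ t) := funext fun t => by
        rw [Real.diam_Icc (by linarith [hr t])]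
        ring
      simpa [hdiam] using hr_tendsto.const_mul 2
    isCompact_out := isCompact_Icc
    isCompact_far := isCompact_Icc
    disjoint_far_nbhd := disjoint_left.2 fun a ha hb => by
      simp only [pow_zero, div_one, mem_Icc] at hb
      linarith [ha.1, hb.2, fixedPt_add_lt_inv hp' hx (by linarith : x < p)]
    continuousOn := (continuousOn_recursionMap q).mono hsupp
    nbhd_subset_image := hnbhd
    out_subset_image := by
      refine (Icc_subset_Icc ?_ ?_).trans ((hnbhd 0).trans (image_mono (Icc_subset_Icc ?_ ?_)))
      all_goals simp only [pow_zero, div_one, zero_add, pow_one]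
      all_goals linarith [div_le_self (by linarith : 0 ≤ E) hκ.le]
    far_subset_image := Icc_inv_subset_image_recursionMap hpq hp hx hx' hpx
    nbhd_retDepth_subset_image := by
      refine (Icc_subset_Icc ?_ ?_).trans
        (Icc_subset_image_Icc_inv (R := E) hpq (by norm_num) (by linarith) (by linarith))
      all_goals rw [← hκ_def]; nlinarith },
    hsupp⟩

end RecursionMap

/-- For `−2 < q < −√3`, the map `f_q(r) = r + q + 1/r` is chaotic in the sense
of Li and Yorke on `(0, ∞)`: there is an uncountable set `S ⊆ (0, ∞)` of
initial points with positive bounded orbits such that for all distinct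
`u, v ∈ S`, `limsup |f_q^n(u) − f_q^n(v)| > 0` and
`liminf |f_q^n(u) − f_q^n(v)| = 0`. -/
theorem stmt_7 (q : ℝ) (hq1 : -2 < q) (hq2 : q < -Real.sqrt 3) :
    ∃ S : Set ℝ, S ⊆ Set.Ioi (0 : ℝ) ∧ ¬ S.Countable ∧
      (∀ r₀ ∈ S,
        (∀ n : ℕ, (fun r : ℝ => r + q + 1 / r)^[n] r₀ ∈ Set.Ioi (0 : ℝ)) ∧
        ∃ M : ℝ, ∀ n : ℕ, |(fun r : ℝ => r + q + 1 / r)^[n] r₀| ≤ M) ∧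
      (∀ u ∈ S, ∀ v ∈ S, u ≠ v →
        0 < Filter.limsup
            (fun n : ℕ =>
              |(fun r : ℝ => r + q + 1 / r)^[n] u -
                (fun r : ℝ => r + q + 1 / r)^[n] v|) Filter.atTop ∧
        Filter.liminf
            (fun n : ℕ =>
              |(fun r : ℝ => r + q + 1 / r)^[n] u -
                (fun r : ℝ => r + q + 1 / r)^[n] v|) Filter.atTop = 0) := by
  obtain ⟨p, x, hpq, hp, hp', hx, hx', hpx⟩ := exists_fixedPt_snapBackPt hq1 hq2
  obtain ⟨P, hP⟩ := exists_snapBackCover_recursionMap hpq hp hp' hx hx' hpx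
  obtain ⟨S, hS, hSP, hscr⟩ := P.exists_isScrambled
  obtain ⟨M, hM⟩ := P.isCompact_support.isBounded.exists_norm_le
  refine ⟨S, fun u hu => hP (hSP u hu 0), hS, fun u hu => ⟨fun n => hP (hSP u hu n),
    M, fun n => hM _ (hSP u hu n)⟩, fun u hu v hv huv => ?_⟩
  have := hscr u hu v hv huv
  simp only [Real.dist_eq] at this
  exact this
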